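/- The function f is nowhere monotonic: there is no nondegenerate subinterval of [0,1] on which f is monotone. -/

import Mathlib

open Set Filter

/-- Value of an `s`-adic code `α`: `∑ αₙ / sⁿ⁺¹`. -/
noncomputable def sval (s : ℕ) (α : ℕ → ℕ) : ℝ := ∑' n, (α n : ℝ) / (s : ℝ) ^ (n + 1)

/-- `α` is a sequence of digits in `{0, …, s−1}`. -/
def isDigits (s : ℕ) (α : ℕ → ℕ) : Prop := ∀ n, α n < s

/-- The `s`-adic cylinder of rank `m` with base `c₀ … c_{m−1}`. -/
def cylinder (s m : ℕ) (c : ℕ → ℕ) : Set ℝ :=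
  {x | ∃ α : ℕ → ℕ, isDigits s α ∧ (∀ i < m, α i = c i) ∧ x = sval s α}

/-- The sequence of output binary digits `βₙ`. -/
def betaSeq (A1 : Finset ℕ) (α : ℕ → ℕ) : ℕ → ℕ
  | 0 => if α 0 ∈ A1 then 1 else 0
  | n + 1 => if α (n + 1) = α n then betaSeq A1 α n else 1 - betaSeq A1 α n

/-!
Inside any subinterval of `[0,1]` there is an `s`-adic cylinder `c₀ … c_{m−1}`. In it take the
three points with digits `c₀ … c_{m−1} 1 e e e …` for `e = 0, 1, 2`; they increase with `e`.
For `e ≠ 1` the output digit flips once at position `m + 1` and then stays constant, while for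
`e = 1` it never flips after position `m`: so `f` takes the same value at the outer points and a
different one at the middle point, which no monotone function does.
-/

lemma sval_eq_ofDigits {s : ℕ} {α : ℕ → ℕ} (hα : isDigits s α) :
    sval s α = Real.ofDigits (fun n => (⟨α n, hα n⟩ : Fin s)) := by
  simp only [sval, Real.ofDigits, Real.ofDigitsTerm, div_eq_mul_inv]

lemma sval_lt_sval {s : ℕ} {α α' : ℕ → ℕ} (hα : isDigits s α) (hα' : isDigits s α')
    (hle : ∀ n, α n ≤ α' n) {i : ℕ} (hi : α i < α' i) : sval s α < sval s α' := by
  have hs : (0 : ℝ) < s := by exact_mod_cast (Nat.zero_le _).trans_lt (hα 0)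
  rw [sval_eq_ofDigits hα, sval_eq_ofDigits hα', Real.ofDigits, Real.ofDigits]
  refine Summable.tsum_lt_tsum (i := i) (fun n => ?_) ?_ Real.summable_ofDigitsTerm
    Real.summable_ofDigitsTerm <;> simp only [Real.ofDigitsTerm] <;> gcongr
  · exact hle n

lemma abs_sval_sub_sval_le {s m : ℕ} {α α' : ℕ → ℕ} (hα : isDigits s α)
    (hα' : isDigits s α') (h : ∀ i < m, α i = α' i) :
    |sval s α - sval s α'| ≤ ((s : ℝ) ^ m)⁻¹ := by
  rw [sval_eq_ofDigits hα, sval_eq_ofDigits hα']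
  exact Real.abs_ofDigits_sub_ofDigits_le fun i hi => Fin.ext (h i hi)

lemma exists_sval_eq {s : ℕ} (hs : 1 < s) {x : ℝ} (hx : x ∈ Ico 0 1) :
    ∃ α, isDigits s α ∧ sval s α = x := by
  have : NeZero s := ⟨by omega⟩
  refine ⟨fun n => Real.digits x s n, fun n => (Real.digits x s n).isLt, ?_⟩
  rw [sval_eq_ofDigits]
  exact Real.ofDigits_digits hs hx

lemma exists_cylinder_subset_Icc {s : ℕ} (hs : 1 < s) {a b : ℝ} (ha : 0 ≤ a) (hab : a < b)
    (hb : b ≤ 1) : ∃ c m, isDigits s c ∧ cylinder s m c ⊆ Icc a b := by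
  obtain ⟨c, hc, hcx⟩ := exists_sval_eq hs (x := (a + b) / 2) ⟨by linarith, by linarith⟩
  have hs' : (1 : ℝ) < s := by exact_mod_cast hs
  obtain ⟨m, hm⟩ :=
    exists_pow_lt_of_lt_one (half_pos (sub_pos.2 hab)) (inv_lt_one_of_one_lt₀ hs')
  refine ⟨c, m, hc, ?_⟩
  rintro _ ⟨α, hα, hαc, rfl⟩
  have hclose := abs_sval_sub_sval_le hα hc hαc
  rw [hcx, ← inv_pow] at hclose
  constructor <;> linarith [abs_le.1 hclose]

section betaSeq

variable (A1 : Finset ℕ)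

lemma betaSeq_le_one (α : ℕ → ℕ) : ∀ n, betaSeq A1 α n ≤ 1
  | 0 => by unfold betaSeq; split <;> simp
  | n + 1 => by
    have := betaSeq_le_one α n
    unfold betaSeq
    split <;> omega

lemma betaSeq_congr {α α' : ℕ → ℕ} : ∀ {n}, (∀ i ≤ n, α i = α' i) →
    betaSeq A1 α n = betaSeq A1 α' n
  | 0, h => by simp only [betaSeq, h 0 le_rfl]
  | n + 1, h => by
    simp only [betaSeq, h (n + 1) le_rfl, h n n.le_succ,
      betaSeq_congr fun i hi => h i (hi.trans n.le_succ)]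

lemma isDigits_two_betaSeq (α : ℕ → ℕ) : isDigits 2 (betaSeq A1 α) :=
  fun n => Nat.lt_succ_of_le (betaSeq_le_one A1 α n)

lemma betaSeq_eq_of_forall_ge_eq {α : ℕ → ℕ} {N : ℕ} (h : ∀ n ≥ N, α n = α N)
    {n : ℕ} (hn : N ≤ n) : betaSeq A1 α n = betaSeq A1 α N := by
  induction n, hn using Nat.le_induction with
  | base => rfl
  | succ n hn ih => rw [betaSeq, h (n + 1) (by omega), h n hn, if_pos rfl, ih]

end betaSeq

def zigzagDigits (c : ℕ → ℕ) (m e : ℕ) (n : ℕ) : ℕ :=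
  if n < m then c n else if n = m then 1 else e

section zigzagDigits

variable {s : ℕ} {c : ℕ → ℕ} {m : ℕ}

lemma zigzagDigits_of_le {n : ℕ} (hn : n ≤ m) (e e' : ℕ) :
    zigzagDigits c m e n = zigzagDigits c m e' n := by
  obtain hn | rfl := hn.lt_or_eq <;> simp [zigzagDigits, *]

lemma isDigits_zigzagDigits (hc : isDigits s c) (hs : 1 < s) {e : ℕ} (he : e < s) :
    isDigits s (zigzagDigits c m e) := by
  intro n
  unfold zigzagDigits
  split_ifs
  exacts [hc n, hs, he]

lemma sval_zigzagDigits_mem_cylinder (hc : isDigits s c) (hs : 1 < s) {e : ℕ} (he : e < s) :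
    sval s (zigzagDigits c m e) ∈ cylinder s m c :=
  ⟨_, isDigits_zigzagDigits hc hs he, fun _ hi => if_pos hi, rfl⟩

lemma sval_zigzagDigits_lt (hc : isDigits s c) (hs : 1 < s) {e e' : ℕ} (hee' : e < e')
    (he' : e' < s) : sval s (zigzagDigits c m e) < sval s (zigzagDigits c m e') := by
  refine sval_lt_sval (isDigits_zigzagDigits hc hs (hee'.trans he'))
    (isDigits_zigzagDigits hc hs he') (fun n => ?_) (i := m + 1) ?_
  · unfold zigzagDigits
    split_ifs <;> omega
  · simpa [zigzagDigits] using hee'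

variable (A1 : Finset ℕ) (c m)

lemma betaSeq_zigzagDigits_of_lt {n : ℕ} (hn : m < n) (e : ℕ) :
    betaSeq A1 (zigzagDigits c m e) n =
      if e = 1 then betaSeq A1 (zigzagDigits c m 0) m
      else 1 - betaSeq A1 (zigzagDigits c m 0) m := by
  have htail : ∀ n ≥ m + 1, zigzagDigits c m e n = zigzagDigits c m e (m + 1) := by
    intro n hn
    simp only [zigzagDigits, if_neg (show ¬n < m by omega), if_neg (show n ≠ m by omega),
      if_neg (show ¬m + 1 < m by omega), if_neg (show m + 1 ≠ m by omega)]
  have hprefix : betaSeq A1 (zigzagDigits c m e) m = betaSeq A1 (zigzagDigits c m 0) m :=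
    betaSeq_congr A1 fun i hi => zigzagDigits_of_le hi e 0
  rw [betaSeq_eq_of_forall_ge_eq A1 htail hn, betaSeq, hprefix]
  simp [zigzagDigits, eq_comm]

lemma betaSeq_zigzagDigits_zero_eq_two :
    betaSeq A1 (zigzagDigits c m 0) = betaSeq A1 (zigzagDigits c m 2) := by
  ext n
  rcases le_or_gt n m with hn | hn
  · exact betaSeq_congr A1 fun i hi => zigzagDigits_of_le (hi.trans hn) 0 2
  · simp [betaSeq_zigzagDigits_of_lt c m A1 hn]

lemma sval_betaSeq_zigzagDigits_one_ne_zero :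
    sval 2 (betaSeq A1 (zigzagDigits c m 1)) ≠ sval 2 (betaSeq A1 (zigzagDigits c m 0)) := by
  set B := betaSeq A1 (zigzagDigits c m 0) m
  have hdig : ∀ e, isDigits 2 (betaSeq A1 (zigzagDigits c m e)) := fun e =>
    isDigits_two_betaSeq A1 _
  have hprefix : ∀ n ≤ m,
      betaSeq A1 (zigzagDigits c m 1) n = betaSeq A1 (zigzagDigits c m 0) n :=
    fun n hn => betaSeq_congr A1 fun i hi => zigzagDigits_of_le (hi.trans hn) 1 0
  have htail : ∀ n, m < n →
      betaSeq A1 (zigzagDigits c m 1) n = B ∧ betaSeq A1 (zigzagDigits c m 0) n = 1 - B :=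
    fun n hn => by simp [betaSeq_zigzagDigits_of_lt c m A1 hn, B]
  have hB : B ≤ 1 := betaSeq_le_one A1 _ m
  rcases Nat.le_one_iff_eq_zero_or_eq_one.1 hB with hB | hB
  · refine (sval_lt_sval (hdig 1) (hdig 0) (fun n => ?_) (i := m + 1) ?_).ne
    · rcases le_or_gt n m with hn | hn
      · exact (hprefix n hn).le
      · have := htail n hn; omega
    · have := htail (m + 1) m.lt_succ_self; omega
  · refine (sval_lt_sval (hdig 0) (hdig 1) (fun n => ?_) (i := m + 1) ?_).ne'
    · rcases le_or_gt n m with hn | hn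
      · exact (hprefix n hn).ge
      · have := htail n hn; omega
    · have := htail (m + 1) m.lt_succ_self; omega

end zigzagDigits

lemma not_monotoneOn_and_not_antitoneOn_of_zigzag {α β : Type*} [Preorder α] [PartialOrder β]
    {f : α → β} {S : Set α} {x y z : α} (hx : x ∈ S) (hy : y ∈ S) (hz : z ∈ S)
    (hxy : x ≤ y) (hyz : y ≤ z) (hfxz : f x = f z) (hfy : f y ≠ f x) :
    ¬MonotoneOn f S ∧ ¬AntitoneOn f S := by
  constructor <;> intro hf
  · exact hfy (le_antisymm (hfxz ▸ hf hy hz hyz) (hf hx hy hxy))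
  · exact hfy (le_antisymm (hf hx hy hxy) (hfxz ▸ hf hy hz hyz))

theorem f_nowhere_monotone_general (s : ℕ) (hs : 2 < s) (A1 : Finset ℕ) (f : ℝ → ℝ)
    (hf : ∀ α : ℕ → ℕ, isDigits s α → f (sval s α) = sval 2 (betaSeq A1 α)) :
    ∀ a b : ℝ, 0 ≤ a → a < b → b ≤ 1 →
      ¬ MonotoneOn f (Set.Icc a b) ∧ ¬ AntitoneOn f (Set.Icc a b) := by
  intro a b ha hab hb
  have hs1 : 1 < s := by omega
  obtain ⟨c, m, hc, hcyl⟩ := exists_cylinder_subset_Icc hs1 ha hab hb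
  have hmem : ∀ e < s, sval s (zigzagDigits c m e) ∈ Set.Icc a b := fun e he =>
    hcyl (sval_zigzagDigits_mem_cylinder hc hs1 he)
  have hfx : ∀ e < s,
      f (sval s (zigzagDigits c m e)) = sval 2 (betaSeq A1 (zigzagDigits c m e)) :=
    fun e he => hf _ (isDigits_zigzagDigits hc hs1 he)
  refine not_monotoneOn_and_not_antitoneOn_of_zigzag (hmem 0 (by omega)) (hmem 1 hs1) (hmem 2 hs)
    (sval_zigzagDigits_lt hc hs1 zero_lt_one hs1).le (sval_zigzagDigits_lt hc hs1 one_lt_two hs).le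
    ?_ ?_
  · rw [hfx 0 (by omega), hfx 2 hs, betaSeq_zigzagDigits_zero_eq_two]
  · rw [hfx 1 hs1, hfx 0 (by omega)]
    exact sval_betaSeq_zigzagDigits_one_ne_zero c m A1

/-- `f` is nowhere monotonic: on no nondegenerate subinterval of `[0,1]`
is `f` monotone (neither nondecreasing nor nonincreasing). -/
theorem f_nowhere_monotone (s : ℕ) (hs : 2 < s) (A0 A1 : Finset ℕ)
    (hA : A0 ∪ A1 = Finset.range s) (hdisj : Disjoint A0 A1)
    (h0 : A0.Nonempty) (h1 : A1.Nonempty) (f : ℝ → ℝ)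
    (hf : ∀ α : ℕ → ℕ, isDigits s α → f (sval s α) = sval 2 (betaSeq A1 α)) :
    ∀ a b : ℝ, 0 ≤ a → a < b → b ≤ 1 →
      ¬ MonotoneOn f (Set.Icc a b) ∧ ¬ AntitoneOn f (Set.Icc a b) :=
  f_nowhere_monotone_general s hs A1 f hf
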